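/- Suppose the random variables X_1, …, X_n are mutually independent, U, V ⊆ [n] are disjoint, H[X_U | Y_N] = 0, H[X_{[n]∖(U∪V)} | Y_N, X_{U∪V}] = 0, and H[X_V | Y_N, X_{V̄}] = 0. Let Q = {J ∈ N : J ∩ V ≠ ∅ and J ⊄ U ∪ V}. Then H[X_{[n]}] ≤ H[Y_N] + H[Y_Q | X_{U∪V}]. (Entropy form of Theorem 2.) -/

import Mathlib

/-!
All random variables involved are functions of the full message tuple `X`, so the argument
is an entropy calculus for functions on one finite distribution. As `Y_N` is a function of
`X`, `H[X] = H[Y_N] + H[X | Y_N]`, and the chain rule splits `H[X | Y_N]` along `U`, `V` and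
`R = [n] ∖ (U ∪ V)`; the `U`- and `V`-terms vanish by hypothesis, leaving `H[X_R | X_U, Y_N]`.
Replacing `Y_N` by the outputs `Y_A` of the servers that see no message of `V` can only
increase this, and since `(X_R, X_U, Y_A)` is a function of `X_{V̄}`, which is independent of
`X_V`, the condition may then be enlarged by `X_V` for free. Finally
`H[X_R | Y_A, X_{U∪V}] ≤ H[Y_Q | Y_A, X_{U∪V}] + H[X_R | Y_N, X_{U∪V}]` because `Y_Q`, `Y_A`
and `X_{U∪V}` together determine `Y_N`, and the last term vanishes by hypothesis.
-/

open MeasureTheory Real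

namespace DistIndexCoding

variable {Ω : Type*} [MeasurableSpace Ω]

/-- Shannon entropy (in nats) of a finitely-valued random variable. -/
noncomputable def ent {α : Type*} [Fintype α] (μ : Measure Ω) (X : Ω → α) : ℝ :=
  ∑ a : α, negMulLog (μ (X ⁻¹' {a})).toReal

/-- Conditional entropy `H[X | Y]`, defined via the chain rule `H[X|Y] = H[X,Y] - H[Y]`. -/
noncomputable def cent {α β : Type*} [Fintype α] [Fintype β]
    (μ : Measure Ω) (X : Ω → α) (Y : Ω → β) : ℝ :=
  ent μ (fun ω => (X ω, Y ω)) - ent μ Y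

/-- Conditional mutual information `I[X : Y | Z] = H[X | Z] - H[X | Y, Z]`. -/
noncomputable def cmi {α β γ : Type*} [Fintype α] [Fintype β] [Fintype γ]
    (μ : Measure Ω) (X : Ω → α) (Y : Ω → β) (Z : Ω → γ) : ℝ :=
  cent μ X Z - cent μ X (fun ω => (Y ω, Z ω))

variable {n : ℕ} {𝒳 : Fin n → Type*} {𝒴 : Finset (Fin n) → Type*}

/-- The subtuple `X_S = (X_i : i ∈ S)`. -/
def subtuple (X : ∀ i, Ω → 𝒳 i) (S : Finset (Fin n)) : Ω → (∀ i : S, 𝒳 i.1) :=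
  fun ω i => X i.1 ω

/-- The tuple of server outputs `(Y_J = φ_J(X_J) : J satisfying p)`; taking
`p J := J.Nonempty` gives the full tuple `Y_N`. -/
def outputs (φ : ∀ J : Finset (Fin n), (∀ j : J, 𝒳 j.1) → 𝒴 J)
    (X : ∀ i, Ω → 𝒳 i) (p : Finset (Fin n) → Prop) [DecidablePred p] :
    Ω → (∀ J : {J : Finset (Fin n) // p J}, 𝒴 J.1) :=
  fun ω J => φ J.1 (fun j => X j.1 ω)

section Determination

variable {α β γ δ : Type*}

def Determines (f : α → β) (g : α → γ) : Prop := ∃ k : β → γ, ∀ a, g a = k (f a)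

namespace Determines

variable {f : α → β} {g : α → γ} {h : α → δ}

lemma refl (f : α → β) : Determines f f := ⟨id, fun _ => rfl⟩

lemma trans (hfg : Determines f g) (hgh : Determines g h) : Determines f h := by
  obtain ⟨k, hk⟩ := hfg
  obtain ⟨l, hl⟩ := hgh
  exact ⟨l ∘ k, fun a => by rw [hl, hk]; rfl⟩

lemma pair (hfg : Determines f g) (hfh : Determines f h) :
    Determines f (fun a => (g a, h a)) := by
  obtain ⟨k, hk⟩ := hfg
  obtain ⟨l, hl⟩ := hfh
  exact ⟨fun b => (k b, l b), fun a => Prod.ext (hk a) (hl a)⟩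

lemma fst : Determines (fun a => (f a, g a)) f := ⟨Prod.fst, fun _ => rfl⟩

lemma snd : Determines (fun a => (f a, g a)) g := ⟨Prod.snd, fun _ => rfl⟩

lemma pi {ι : Type*} {κ : ι → Type*} {g : α → ∀ i, κ i}
    (h : ∀ i, Determines f (fun a => g a i)) : Determines f g := by
  choose k hk using h
  exact ⟨fun b i => k i b, fun a => funext fun i => hk i a⟩

end Determines

end Determination

section NegMulLog

lemma negMulLog_sum_le {ι : Type*} (s : Finset ι) {x : ι → ℝ} (hx : ∀ i ∈ s, 0 ≤ x i) :
    negMulLog (∑ i ∈ s, x i) ≤ ∑ i ∈ s, negMulLog (x i) := by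
  rw [negMulLog, neg_mul, Finset.sum_mul, ← Finset.sum_neg_distrib]
  refine Finset.sum_le_sum fun i hi => ?_
  rcases (hx i hi).eq_or_lt with h0 | h0
  · simp [← h0]
  · rw [negMulLog, neg_mul, neg_le_neg_iff]
    exact mul_le_mul_of_nonneg_left (log_le_log h0 (Finset.single_le_sum hx hi)) h0.le

-- `log x ≤ x - 1` at `x = b c / (q a)`.
lemma negMulLog_add_mul_log_le {q a b c : ℝ} (hq : 0 ≤ q) (ha : q ≤ a) (hb : q ≤ b)
    (hc : q ≤ c) : negMulLog q + q * log b + q * log c ≤ q * log a + (b * c / a - q) := by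
  rcases hq.eq_or_lt with rfl | hq
  · simp only [negMulLog_zero, zero_mul, add_zero, zero_add, sub_zero]
    exact div_nonneg (mul_nonneg hb hc) ha
  have hlog := log_le_sub_one_of_pos (show 0 < b * c / (q * a) by
    have := hq.trans_le ha; have := hq.trans_le hb; have := hq.trans_le hc; positivity)
  rw [log_div (by nlinarith) (by nlinarith), log_mul (by linarith) (by linarith),
    log_mul (by linarith) (by linarith)] at hlog
  have hmul := mul_le_mul_of_nonneg_left hlog hq.le
  rw [show q * (b * c / (q * a) - 1) = b * c / a - q by field_simp] at hmul
  rw [negMulLog]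
  linarith

lemma sum_negMulLog_add_negMulLog_sum_le {ι κ : Type*} [Fintype ι] [Fintype κ]
    {q : ι → κ → ℝ} (hq : ∀ i j, 0 ≤ q i j) :
    ∑ i, ∑ j, negMulLog (q i j) + negMulLog (∑ i, ∑ j, q i j)
      ≤ ∑ i, negMulLog (∑ j, q i j) + ∑ j, negMulLog (∑ i, q i j) := by
  set B := fun i => ∑ j, q i j
  set C := fun j => ∑ i, q i j
  set A := ∑ i, ∑ j, q i j
  have hqB : ∀ i j, q i j ≤ B i := fun i j => Finset.single_le_sum (fun j _ => hq i j) (by simp)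
  have hqC : ∀ i j, q i j ≤ C j := fun i j => Finset.single_le_sum (fun i _ => hq i j) (by simp)
  have hBA : ∀ i, B i ≤ A := fun i =>
    Finset.single_le_sum (fun i _ => Finset.sum_nonneg fun j _ => hq i j) (by simp)
  have hsumC : ∑ j, C j = A := Finset.sum_comm
  have key := Finset.sum_le_sum fun i (_ : i ∈ Finset.univ) => Finset.sum_le_sum
    fun j (_ : j ∈ Finset.univ) =>
      negMulLog_add_mul_log_le (hq i j) ((hqB i j).trans (hBA i)) (hqB i j) (hqC i j)
  have hB : ∑ i, ∑ j, q i j * log (B i) = -∑ i, negMulLog (B i) := by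
    simp [negMulLog, ← Finset.sum_mul, B]
  have hC : ∑ i, ∑ j, q i j * log (C j) = -∑ j, negMulLog (C j) := by
    rw [Finset.sum_comm]
    simp [negMulLog, ← Finset.sum_mul, C]
  have hA : ∑ i, ∑ j, q i j * log A = -negMulLog A := by
    simp [negMulLog, ← Finset.sum_mul, A]
  have hrest : ∑ i, ∑ j, (B i * C j / A - q i j) = 0 := by
    simp only [Finset.sum_sub_distrib, ← Finset.sum_div, ← Finset.mul_sum, ← Finset.sum_mul,
      hsumC]
    rw [show ∑ i, B i = A from rfl, mul_self_div_self, sub_self]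
  simp only [Finset.sum_add_distrib] at key
  linarith

end NegMulLog

noncomputable section FiniteEntropy

-- One decidability instance for every fibre `{a | f a = b}`, whatever the codomain of `f`.
attribute [local instance 2000] Classical.propDecidable

variable {α β γ δ : Type*} [Fintype α] {p : α → ℝ}

/- Functions on a finite sample space `α` with weights `p` play the role of random variables;
`fiberMass p f` is the law of `f`. -/
def fiberMass (p : α → ℝ) (f : α → β) (b : β) : ℝ := ∑ a with f a = b, p a

def entropy [Fintype β] (p : α → ℝ) (f : α → β) : ℝ := ∑ b, negMulLog (fiberMass p f b)

def condEntropy [Fintype β] [Fintype γ] (p : α → ℝ) (f : α → β) (g : α → γ) : ℝ :=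
  entropy p (fun a => (f a, g a)) - entropy p g

def IndepFibers (p : α → ℝ) (f : α → β) (g : α → γ) : Prop :=
  ∀ b c, fiberMass p (fun a => (f a, g a)) (b, c) = fiberMass p f b * fiberMass p g c

lemma fiberMass_nonneg (hp : 0 ≤ p) (f : α → β) (b : β) : 0 ≤ fiberMass p f b :=
  Finset.sum_nonneg fun a _ => hp a

lemma fiberMass_comp [Fintype β] (f : α → β) (k : β → γ) (c : γ) :
    fiberMass p (fun a => k (f a)) c = ∑ b with k b = c, fiberMass p f b := by
  unfold fiberMass
  rw [← Finset.sum_fiberwise_of_maps_to (g := f) (t := {b | k b = c}) (by simp)]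
  refine Finset.sum_congr rfl fun b hb => Finset.sum_congr ?_ fun _ _ => rfl
  ext a
  simp only [Finset.mem_filter, Finset.mem_univ, true_and] at hb ⊢
  constructor
  · exact fun h => h.2
  · exact fun h => ⟨h ▸ hb, h⟩

lemma sum_fiberMass [Fintype β] (f : α → β) : ∑ b, fiberMass p f b = ∑ a, p a :=
  Finset.sum_fiberwise _ _ _

lemma sum_fiberMass_pair [Fintype γ] (f : α → β) (g : α → γ) (b : β) :
    ∑ c, fiberMass p (fun a => (f a, g a)) (b, c) = fiberMass p f b := by
  unfold fiberMass
  rw [← Finset.sum_fiberwise _ g]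
  refine Finset.sum_congr rfl fun c _ => Finset.sum_congr ?_ fun _ _ => rfl
  ext a
  simp

lemma sum_fiberMass_pair_left [Fintype β] (f : α → β) (g : α → γ) (c : γ) :
    ∑ b, fiberMass p (fun a => (f a, g a)) (b, c) = fiberMass p g c := by
  unfold fiberMass
  rw [← Finset.sum_fiberwise _ f]
  refine Finset.sum_congr rfl fun b _ => Finset.sum_congr ?_ fun _ _ => rfl
  ext a
  simp [and_comm]

lemma entropy_comp_le [Fintype β] [Fintype γ] (hp : 0 ≤ p) (f : α → β) (k : β → γ) :
    entropy p (fun a => k (f a)) ≤ entropy p f := by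
  unfold entropy
  calc ∑ c, negMulLog (fiberMass p (fun a => k (f a)) c)
      ≤ ∑ c, ∑ b with k b = c, negMulLog (fiberMass p f b) := by
        refine Finset.sum_le_sum fun c _ => ?_
        rw [fiberMass_comp]
        exact negMulLog_sum_le _ fun b _ => fiberMass_nonneg hp f b
    _ = ∑ b, negMulLog (fiberMass p f b) := Finset.sum_fiberwise _ _ _

lemma entropy_pair_add_negMulLog_le [Fintype β] [Fintype γ] (hp : 0 ≤ p) (f : α → β) (g : α → γ) :
    entropy p (fun a => (f a, g a)) + negMulLog (∑ a, p a) ≤ entropy p f + entropy p g := by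
  have h := sum_negMulLog_add_negMulLog_sum_le
    (q := fun b c => fiberMass p (fun a => (f a, g a)) (b, c)) fun b c => fiberMass_nonneg hp _ _
  simp only [sum_fiberMass_pair, sum_fiberMass_pair_left, sum_fiberMass] at h
  rwa [entropy, Fintype.sum_prod_type]

lemma fiberMass_pair_eq_fiberMass_restrict [Fintype β] (f : α → β) (h : α → δ) (b : β) (d : δ) :
    fiberMass p (fun a => (f a, h a)) (b, d)
      = fiberMass (fun a => if h a = d then p a else 0) f b := by
  unfold fiberMass
  rw [← Finset.sum_filter, Finset.filter_filter]
  congr 1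
  ext a
  simp

lemma entropy_pair_eq_sum [Fintype β] [Fintype δ] (f : α → β) (h : α → δ) :
    entropy p (fun a => (f a, h a))
      = ∑ d, entropy (fun a => if h a = d then p a else 0) f := by
  rw [entropy, Fintype.sum_prod_type, Finset.sum_comm]
  simp only [fiberMass_pair_eq_fiberMass_restrict, entropy]

lemma entropy_submodular [Fintype β] [Fintype γ] [Fintype δ] (hp : 0 ≤ p)
    (f : α → β) (g : α → γ) (h : α → δ) :
    entropy p (fun a => ((f a, g a), h a)) + entropy p h
      ≤ entropy p (fun a => (f a, h a)) + entropy p (fun a => (g a, h a)) := by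
  have hrestrict : ∀ d, 0 ≤ fun a => if h a = d then p a else 0 := fun d a =>
    ite_nonneg (hp a) le_rfl
  have hmass : ∀ d, ∑ a, (if h a = d then p a else 0) = fiberMass p h d := fun d => by
    rw [fiberMass, Finset.sum_filter]
  rw [entropy_pair_eq_sum (fun a => (f a, g a)), entropy_pair_eq_sum f, entropy_pair_eq_sum g,
    entropy, ← Finset.sum_add_distrib, ← Finset.sum_add_distrib]
  refine Finset.sum_le_sum fun d _ => ?_
  rw [← hmass]
  exact entropy_pair_add_negMulLog_le (hrestrict d) f g

variable [Fintype β] [Fintype γ] [Fintype δ] {f : α → β} {g : α → γ} {h : α → δ}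

lemma Determines.entropy_le (hp : 0 ≤ p) (hfg : Determines f g) :
    entropy p g ≤ entropy p f := by
  obtain ⟨k, hk⟩ := hfg
  rw [show g = fun a => k (f a) from funext hk]
  exact entropy_comp_le hp f k

lemma Determines.entropy_eq (hp : 0 ≤ p) (hfg : Determines f g) (hgf : Determines g f) :
    entropy p f = entropy p g :=
  le_antisymm (hgf.entropy_le hp) (hfg.entropy_le hp)

lemma Determines.entropy_pair (hp : 0 ≤ p) (hfg : Determines f g) :
    entropy p (fun a => (f a, g a)) = entropy p f :=
  Determines.fst.entropy_eq hp ((Determines.refl f).pair hfg)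

lemma Determines.entropy_eq_add_condEntropy (hp : 0 ≤ p) (hfg : Determines f g) :
    entropy p f = entropy p g + condEntropy p f g := by
  rw [condEntropy, hfg.entropy_pair hp]
  ring

lemma condEntropy_pair (hp : 0 ≤ p) (f : α → β) (f' : α → δ) (g : α → γ) :
    condEntropy p (fun a => (f a, f' a)) g
      = condEntropy p f' g + condEntropy p f (fun a => (f' a, g a)) := by
  have hassoc : entropy p (fun a => ((f a, f' a), g a)) = entropy p (fun a => (f a, (f' a, g a))) :=
    Determines.entropy_eq hp ⟨fun x => (x.1.1, (x.1.2, x.2)), fun _ => rfl⟩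
      ⟨fun x => ((x.1, x.2.1), x.2.2), fun _ => rfl⟩
  unfold condEntropy
  rw [hassoc]
  ring

lemma Determines.condEntropy_le_left {f' : α → δ} (hp : 0 ≤ p) (hf : Determines f' f)
    (g : α → γ) : condEntropy p f g ≤ condEntropy p f' g :=
  sub_le_sub_right ((Determines.fst.trans hf).pair Determines.snd |>.entropy_le hp) _

lemma Determines.condEntropy_le_right {g' : α → δ} (hp : 0 ≤ p) (hg : Determines g g')
    (f : α → β) : condEntropy p f g ≤ condEntropy p f g' := by
  have hsub := entropy_submodular hp f g g'
  rw [(Determines.snd.trans hg).entropy_pair hp, hg.entropy_pair hp] at hsub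
  unfold condEntropy
  linarith

lemma IndepFibers.of_determines {β' γ' : Type*} {f' : α → β'}
    {g' : α → γ'} (hfg : IndepFibers p f g) (hf : Determines f f') (hg : Determines g g') :
    IndepFibers p f' g' := by
  obtain ⟨k, hk⟩ := hf
  obtain ⟨l, hl⟩ := hg
  intro b' c'
  rw [show f' = fun a => k (f a) from funext hk, show g' = fun a => l (g a) from funext hl,
    fiberMass_comp (fun a => (f a, g a)) (fun x => (k x.1, l x.2)), fiberMass_comp f k,
    fiberMass_comp g l, Finset.sum_mul_sum, ← Finset.sum_product']
  refine Finset.sum_congr ?_ fun x _ => hfg x.1 x.2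
  ext x
  simp

lemma entropy_pair_of_indepFibers (hs : ∑ a, p a = 1) (hfg : IndepFibers p f g) :
    entropy p (fun a => (f a, g a)) = entropy p f + entropy p g := by
  have hrow : ∀ b, ∑ c, negMulLog (fiberMass p (fun a => (f a, g a)) (b, c))
      = negMulLog (fiberMass p f b) + fiberMass p f b * entropy p g := by
    intro b
    simp only [hfg b, negMulLog_mul, Finset.sum_add_distrib, ← Finset.sum_mul, ← Finset.mul_sum,
      sum_fiberMass, hs, one_mul, entropy]
  rw [entropy, Fintype.sum_prod_type]
  simp only [hrow, Finset.sum_add_distrib, ← Finset.sum_mul, sum_fiberMass, hs, one_mul, entropy]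

lemma condEntropy_pair_right_of_indepFibers (hp : 0 ≤ p) (hs : ∑ a, p a = 1)
    (hind : IndepFibers p (fun a => (f a, g a)) h) :
    condEntropy p f (fun a => (g a, h a)) = condEntropy p f g := by
  have hassoc : entropy p (fun a => (f a, (g a, h a))) = entropy p (fun a => ((f a, g a), h a)) :=
    Determines.entropy_eq hp ⟨fun x => ((x.1, x.2.1), x.2.2), fun _ => rfl⟩
      ⟨fun x => (x.1.1, (x.1.2, x.2)), fun _ => rfl⟩
  have hgh : IndepFibers p g h := hind.of_determines Determines.snd (Determines.refl h)
  unfold condEntropy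
  rw [hassoc, entropy_pair_of_indepFibers hs hind, entropy_pair_of_indepFibers hs hgh]
  ring

end FiniteEntropy

section Bridge

variable {α : Type*} (μ : Measure Ω) {W : Ω → α}

noncomputable def probMass (μ : Measure Ω) (W : Ω → α) (a : α) : ℝ := (μ (W ⁻¹' {a})).toReal

lemma probMass_nonneg : 0 ≤ probMass μ W := fun _ => ENNReal.toReal_nonneg

variable [Fintype α] [MeasurableSpace α] [MeasurableSingletonClass α] [IsProbabilityMeasure μ]

lemma fiberMass_probMass {β : Type*} (hW : Measurable W) (f : α → β) (b : β) :
    fiberMass (probMass μ W) f b = (μ ((fun ω => f (W ω)) ⁻¹' {b})).toReal := by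
  classical
  unfold fiberMass probMass
  rw [← ENNReal.toReal_sum fun _ _ => measure_ne_top μ _,
    sum_measure_preimage_singleton _ fun a _ => hW (measurableSet_singleton a)]
  congr 2
  ext ω
  simp

lemma sum_probMass (hW : Measurable W) : ∑ a, probMass μ W a = 1 := by
  unfold probMass
  rw [← ENNReal.toReal_sum fun _ _ => measure_ne_top μ _,
    sum_measure_preimage_singleton _ fun a _ => hW (measurableSet_singleton a), Finset.coe_univ,
    Set.preimage_univ, measure_univ, ENNReal.toReal_one]

lemma ent_eq_entropy {β : Type*} [Fintype β] (hW : Measurable W) (f : α → β) :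
    ent μ (fun ω => f (W ω)) = entropy (probMass μ W) f :=
  Finset.sum_congr rfl fun b _ => by rw [fiberMass_probMass μ hW]

lemma cent_eq_condEntropy {β γ : Type*} [Fintype β] [Fintype γ] (hW : Measurable W)
    (f : α → β) (g : α → γ) :
    cent μ (fun ω => f (W ω)) (fun ω => g (W ω)) = condEntropy (probMass μ W) f g := by
  rw [cent, condEntropy, ent_eq_entropy μ hW, ent_eq_entropy μ hW (fun a => (f a, g a))]

lemma indepFibers_probMass {β γ : Type*} [MeasurableSpace β] [MeasurableSingletonClass β]
    [MeasurableSpace γ] [MeasurableSingletonClass γ] (hW : Measurable W) {f : α → β} {g : α → γ}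
    (hfg : ProbabilityTheory.IndepFun (fun ω => f (W ω)) (fun ω => g (W ω)) μ) :
    IndepFibers (probMass μ W) f g := by
  intro b c
  rw [fiberMass_probMass μ hW, fiberMass_probMass μ hW, fiberMass_probMass μ hW,
    ← ENNReal.toReal_mul, ← hfg.measure_inter_preimage_eq_mul _ _ (measurableSet_singleton b)
      (measurableSet_singleton c)]
  congr 2
  ext ω
  simp

end Bridge

section MessageTuples

-- Indexed by `↥Finset.univ` so that `subtuple X Finset.univ` takes values in `MessageTuple 𝒳`.
abbrev MessageTuple (𝒳 : Fin n → Type*) := ∀ i : ↥(Finset.univ : Finset (Fin n)), 𝒳 i.1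

def coord (i : Fin n) (w : MessageTuple 𝒳) : 𝒳 i := w ⟨i, Finset.mem_univ i⟩

def restrictTuple (S : Finset (Fin n)) (w : MessageTuple 𝒳) : ∀ i : ↥S, 𝒳 i.1 :=
  fun i => coord i.1 w

def serverOutput (φ : ∀ J : Finset (Fin n), (∀ j : J, 𝒳 j.1) → 𝒴 J) (J : Finset (Fin n))
    (w : MessageTuple 𝒳) : 𝒴 J :=
  φ J (restrictTuple J w)

def outputTuple (φ : ∀ J : Finset (Fin n), (∀ j : J, 𝒳 j.1) → 𝒴 J) (pr : Finset (Fin n) → Prop)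
    (w : MessageTuple 𝒳) : ∀ J : {J : Finset (Fin n) // pr J}, 𝒴 J.1 :=
  fun J => serverOutput φ J.1 w

variable {β : Type*} {f : MessageTuple 𝒳 → β} {S J : Finset (Fin n)}
  {φ : ∀ J : Finset (Fin n), (∀ j : J, 𝒳 j.1) → 𝒴 J} {pr : Finset (Fin n) → Prop}

lemma determines_coord {i : Fin n} (hi : i ∈ S) :
    Determines (restrictTuple (𝒳 := 𝒳) S) (coord i) :=
  ⟨fun x => x ⟨i, hi⟩, fun _ => rfl⟩

lemma determines_serverOutput_of_subset (hJ : J ⊆ S) :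
    Determines (restrictTuple S) (serverOutput φ J) :=
  ⟨fun x => φ J fun j => x ⟨j, hJ j.2⟩, fun _ => rfl⟩

lemma determines_serverOutput_of_mem (hJ : pr J) :
    Determines (outputTuple φ pr) (serverOutput φ J) :=
  ⟨fun x => x ⟨J, hJ⟩, fun _ => rfl⟩

lemma Determines.id_of_coord (h : ∀ i, Determines f (coord i)) : Determines f id :=
  Determines.pi fun i => h i.1

lemma Determines.restrictTuple (h : ∀ i ∈ S, Determines f (coord i)) :
    Determines f (restrictTuple S) :=
  Determines.pi fun i => h i.1 i.2

lemma Determines.outputTuple (h : ∀ J, pr J → Determines f (serverOutput φ J)) :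
    Determines f (outputTuple φ pr) :=
  Determines.pi fun J => h J.1 J.2

end MessageTuples

section Decoding

variable [∀ i, Fintype (𝒳 i)] [∀ J, Fintype (𝒴 J)] {p : MessageTuple 𝒳 → ℝ}
  (φ : ∀ J : Finset (Fin n), (∀ j : J, 𝒳 j.1) → 𝒴 J) (U V : Finset (Fin n))

lemma entropy_le_entropy_outputs_add_condEntropy (hp : 0 ≤ p)
    (hU : condEntropy p (restrictTuple U) (outputTuple φ (fun J => J.Nonempty)) = 0)
    (hdec : condEntropy p (restrictTuple V)
      (fun w => (outputTuple φ (fun J => J.Nonempty) w, restrictTuple Vᶜ w)) = 0) :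
    entropy p id ≤ entropy p (outputTuple φ (fun J => J.Nonempty))
      + condEntropy p (restrictTuple (Finset.univ \ (U ∪ V)))
          (fun w => (restrictTuple U w, outputTuple φ (fun J => J.Nonempty) w)) := by
  set yN := outputTuple φ (fun J => J.Nonempty)
  set xU := restrictTuple (𝒳 := 𝒳) U
  set xV := restrictTuple (𝒳 := 𝒳) V
  set xR := restrictTuple (𝒳 := 𝒳) (Finset.univ \ (U ∪ V))
  have hcover : Determines (fun w => ((xV w, xR w), xU w)) id := by
    refine Determines.id_of_coord fun i => ?_
    by_cases hiV : i ∈ V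
    · exact (Determines.fst.trans Determines.fst).trans (determines_coord hiV)
    by_cases hiU : i ∈ U
    · exact Determines.snd.trans (determines_coord hiU)
    · exact (Determines.fst.trans Determines.snd).trans (determines_coord (by simp [hiU, hiV]))
  have hsides :
      Determines (fun w => (xR w, (xU w, yN w))) (fun w => (yN w, restrictTuple Vᶜ w)) := by
    refine (Determines.snd.trans Determines.snd).pair (Determines.restrictTuple fun i hi => ?_)
    by_cases hiU : i ∈ U
    · exact (Determines.snd.trans Determines.fst).trans (determines_coord hiU)
    · exact Determines.fst.trans (determines_coord (by simp_all))
  calc entropy p id = entropy p yN + condEntropy p id yN :=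
        Determines.entropy_eq_add_condEntropy hp ⟨yN, fun _ => rfl⟩
    _ ≤ entropy p yN + condEntropy p (fun w => ((xV w, xR w), xU w)) yN := by
        gcongr
        exact hcover.condEntropy_le_left hp yN
    _ = entropy p yN + (condEntropy p xU yN + (condEntropy p xR (fun w => (xU w, yN w))
          + condEntropy p xV (fun w => (xR w, (xU w, yN w))))) := by
        rw [condEntropy_pair hp, condEntropy_pair hp]
    _ ≤ entropy p yN + (0 + (condEntropy p xR (fun w => (xU w, yN w)) + 0)) := by
        gcongr
        · exact hU.le
        · exact hdec ▸ hsides.condEntropy_le_right hp xV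
    _ = entropy p yN + condEntropy p xR (fun w => (xU w, yN w)) := by ring

lemma condEntropy_rest_le_condEntropy_outputs (hp : 0 ≤ p) (hs : ∑ w, p w = 1)
    (hUV : Disjoint U V) (hind : IndepFibers p (restrictTuple Vᶜ) (restrictTuple V))
    (hRest : condEntropy p (restrictTuple (Finset.univ \ (U ∪ V)))
      (fun w => (outputTuple φ (fun J => J.Nonempty) w, restrictTuple (U ∪ V) w)) = 0) :
    condEntropy p (restrictTuple (Finset.univ \ (U ∪ V)))
        (fun w => (restrictTuple U w, outputTuple φ (fun J => J.Nonempty) w))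
      ≤ condEntropy p (outputTuple φ (fun J => J.Nonempty ∧ (J ∩ V).Nonempty ∧ ¬ J ⊆ U ∪ V))
          (restrictTuple (U ∪ V)) := by
  set yN := outputTuple φ (fun J => J.Nonempty)
  set yQ := outputTuple φ (fun J => J.Nonempty ∧ (J ∩ V).Nonempty ∧ ¬ J ⊆ U ∪ V)
  set yA := outputTuple φ (fun J => J.Nonempty ∧ ¬ (J ∩ V).Nonempty)
  set xU := restrictTuple (𝒳 := 𝒳) U
  set xV := restrictTuple (𝒳 := 𝒳) V
  set xR := restrictTuple (𝒳 := 𝒳) (Finset.univ \ (U ∪ V))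
  set xUV := restrictTuple (𝒳 := 𝒳) (U ∪ V)
  have hyA : Determines yN yA :=
    Determines.outputTuple fun J hJ => determines_serverOutput_of_mem hJ.1
  have hxUV : Determines (fun w => ((yA w, xU w), xV w)) (fun w => (yA w, xUV w)) := by
    refine (Determines.fst.trans Determines.fst).pair (Determines.restrictTuple fun i hi => ?_)
    by_cases hiU : i ∈ U
    · exact (Determines.fst.trans Determines.snd).trans (determines_coord hiU)
    · exact Determines.snd.trans (determines_coord (by simp_all))
  have hyN : Determines (fun w => (yQ w, (yA w, xUV w))) (fun w => (yN w, xUV w)) := by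
    refine (Determines.outputTuple fun J hJ => ?_).pair (Determines.snd.trans Determines.snd)
    by_cases hJV : (J ∩ V).Nonempty
    · by_cases hJUV : J ⊆ U ∪ V
      · exact (Determines.snd.trans Determines.snd).trans
          (determines_serverOutput_of_subset hJUV)
      · exact Determines.fst.trans (determines_serverOutput_of_mem ⟨hJ, hJV, hJUV⟩)
    · exact (Determines.snd.trans Determines.fst).trans
        (determines_serverOutput_of_mem ⟨hJ, hJV⟩)
  have hind' : IndepFibers p (fun w => (xR w, (yA w, xU w))) xV := by
    refine hind.of_determines (Determines.pair ?_ (Determines.pair ?_ ?_)) (Determines.refl xV)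
    · exact Determines.restrictTuple fun i hi => determines_coord (by simp_all)
    · refine Determines.outputTuple fun J hJ => determines_serverOutput_of_subset fun j hj => ?_
      exact Finset.mem_compl.2 fun hjV => hJ.2 ⟨j, Finset.mem_inter.2 ⟨hj, hjV⟩⟩
    · exact Determines.restrictTuple fun i hi =>
        determines_coord (Finset.mem_compl.2 (Finset.disjoint_left.1 hUV hi))
  calc condEntropy p xR (fun w => (xU w, yN w))
      ≤ condEntropy p xR (fun w => (yA w, xU w)) :=
        (Determines.snd.trans hyA).pair Determines.fst |>.condEntropy_le_right hp xR
    _ = condEntropy p xR (fun w => ((yA w, xU w), xV w)) :=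
        (condEntropy_pair_right_of_indepFibers hp hs hind').symm
    _ ≤ condEntropy p xR (fun w => (yA w, xUV w)) := hxUV.condEntropy_le_right hp xR
    _ ≤ condEntropy p (fun w => (xR w, yQ w)) (fun w => (yA w, xUV w)) :=
        Determines.fst.condEntropy_le_left hp _
    _ = condEntropy p yQ (fun w => (yA w, xUV w))
          + condEntropy p xR (fun w => (yQ w, (yA w, xUV w))) := condEntropy_pair hp _ _ _
    _ ≤ condEntropy p yQ xUV + 0 := by
        gcongr
        · exact Determines.snd.condEntropy_le_right hp yQ
        · exact hRest ▸ hyN.condEntropy_le_right hp xR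
    _ = condEntropy p yQ xUV := add_zero _

end Decoding

theorem theorem2_entropy_form_general
    [∀ i, Fintype (𝒳 i)]
    [∀ i, MeasurableSpace (𝒳 i)] [∀ i, DiscreteMeasurableSpace (𝒳 i)]
    [∀ J, Fintype (𝒴 J)]
    (μ : Measure Ω) [IsProbabilityMeasure μ]
    (X : ∀ i, Ω → 𝒳 i) (hXmeas : ∀ i, Measurable (X i))
    (hindep : ProbabilityTheory.iIndepFun X μ)
    (φ : ∀ J : Finset (Fin n), (∀ j : J, 𝒳 j.1) → 𝒴 J)
    (U V : Finset (Fin n)) (hUV : Disjoint U V)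
    (hU : cent μ (subtuple X U) (outputs φ X (fun J => J.Nonempty)) = 0)
    (hRest : cent μ (subtuple X (Finset.univ \ (U ∪ V)))
      (fun ω => (outputs φ X (fun J => J.Nonempty) ω, subtuple X (U ∪ V) ω)) = 0)
    (hdec : cent μ (subtuple X V)
      (fun ω => (outputs φ X (fun J => J.Nonempty) ω, subtuple X Vᶜ ω)) = 0) :
    ent μ (subtuple X Finset.univ)
      ≤ ent μ (outputs φ X (fun J => J.Nonempty))
        + cent μ (outputs φ X (fun J => J.Nonempty ∧ (J ∩ V).Nonempty ∧ ¬ J ⊆ U ∪ V))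
            (subtuple X (U ∪ V)) := by
  set W := subtuple X Finset.univ
  have hW : Measurable W := measurable_pi_lambda _ fun i => hXmeas i.1
  have hind : IndepFibers (probMass μ W) (restrictTuple Vᶜ) (restrictTuple V) :=
    indepFibers_probMass μ hW (hindep.indepFun_finset Vᶜ V disjoint_compl_left hXmeas)
  have hdecode := entropy_le_entropy_outputs_add_condEntropy φ U V (probMass_nonneg μ)
    ((cent_eq_condEntropy μ hW _ _).symm.trans hU) ((cent_eq_condEntropy μ hW _ _).symm.trans hdec)
  have hrest := condEntropy_rest_le_condEntropy_outputs φ U V (probMass_nonneg μ)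
    (sum_probMass μ hW) hUV hind ((cent_eq_condEntropy μ hW _ _).symm.trans hRest)
  have key := (ent_eq_entropy μ hW id).trans_le (hdecode.trans (add_le_add le_rfl hrest))
  rwa [← ent_eq_entropy μ hW, ← cent_eq_condEntropy μ hW] at key

/-- **Entropy form of Theorem 2**: if `X_1, …, X_n` are mutually independent,
`U, V` are disjoint, `H[X_U | Y_N] = 0`, `H[X_{[n]∖(U∪V)} | Y_N, X_{U∪V}] = 0` and
`H[X_V | Y_N, X_{V̄}] = 0`, then with `Q = {J ∈ N : J ∩ V ≠ ∅, J ⊄ U ∪ V}` one has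
`H[X_{[n]}] ≤ H[Y_N] + H[Y_Q | X_{U∪V}]`. -/
theorem theorem2_entropy_form
    [∀ i, Fintype (𝒳 i)] [∀ i, Nonempty (𝒳 i)]
    [∀ i, MeasurableSpace (𝒳 i)] [∀ i, DiscreteMeasurableSpace (𝒳 i)]
    [∀ J, Fintype (𝒴 J)]
    (μ : Measure Ω) [IsProbabilityMeasure μ]
    (X : ∀ i, Ω → 𝒳 i) (hXmeas : ∀ i, Measurable (X i))
    (hindep : ProbabilityTheory.iIndepFun X μ)
    (φ : ∀ J : Finset (Fin n), (∀ j : J, 𝒳 j.1) → 𝒴 J)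
    (U V : Finset (Fin n)) (hUV : Disjoint U V)
    (hU : cent μ (subtuple X U) (outputs φ X (fun J => J.Nonempty)) = 0)
    (hRest : cent μ (subtuple X (Finset.univ \ (U ∪ V)))
      (fun ω => (outputs φ X (fun J => J.Nonempty) ω, subtuple X (U ∪ V) ω)) = 0)
    (hdec : cent μ (subtuple X V)
      (fun ω => (outputs φ X (fun J => J.Nonempty) ω, subtuple X Vᶜ ω)) = 0) :
    ent μ (subtuple X Finset.univ)
      ≤ ent μ (outputs φ X (fun J => J.Nonempty))
        + cent μ (outputs φ X (fun J => J.Nonempty ∧ (J ∩ V).Nonempty ∧ ¬ J ⊆ U ∪ V))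
            (subtuple X (U ∪ V)) :=
  theorem2_entropy_form_general μ X hXmeas hindep φ U V hUV hU hRest hdec

end DistIndexCoding
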